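/- Let n, d ≥ 1 and let A ∈ ℝ^{n×d} have rows a_1, …, a_n ∈ ℝ^d which span ℝ^d. Then for every t ∈ ℝ^n and every v ∈ ℝ^n, H(t)[v,v] ≤ Σ_{i=1}^n v_i²·exp(t_i)·a_iᵀ Z(t)^{−1} a_i ≤ d·(max_{i∈[n]} |v_i|)². (That is, Barthe's objective is d-smooth with respect to the ℓ∞ norm.) -/

import Mathlib

open Matrix

/-- `Z(t) := ∑ i, exp (t i) • a_i a_iᵀ`, where `a_i` are the rows of `A`. -/
noncomputable def Zmat {n d : ℕ} (A : Matrix (Fin n) (Fin d) ℝ) (t : Fin n → ℝ) :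
    Matrix (Fin d) (Fin d) ℝ :=
  ∑ i, Real.exp (t i) • vecMulVec (A i) (A i)

/-- The quadratic form of the Hessian of Barthe's objective. -/
noncomputable def bartheH {n d : ℕ} (A : Matrix (Fin n) (Fin d) ℝ) (t v : Fin n → ℝ) : ℝ :=
  (∑ i, v i ^ 2 * Real.exp (t i) * (A i ⬝ᵥ ((Zmat A t)⁻¹ *ᵥ A i)))
    - ∑ i, ∑ j, v i * v j * Real.exp (t i + t j) * (A i ⬝ᵥ ((Zmat A t)⁻¹ *ᵥ A j)) ^ 2

private lemma sum_comm3 {M : Type*} [AddCommMonoid M] {a b c : Type*}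
    [Fintype a] [Fintype b] [Fintype c] (f : a → b → c → M) :
    ∑ i, ∑ k, ∑ l, f i k l = ∑ k, ∑ l, ∑ i, f i k l :=
  (Finset.sum_comm).trans (Finset.sum_congr rfl fun _ _ => Finset.sum_comm)

private lemma sum_comm4 {M : Type*} [AddCommMonoid M] {a b c e : Type*}
    [Fintype a] [Fintype b] [Fintype c] [Fintype e] (f : a → b → c → e → M) :
    ∑ i, ∑ j, ∑ k, ∑ l, f i j k l = ∑ k, ∑ l, ∑ i, ∑ j, f i j k l :=
  calc ∑ i, ∑ j, ∑ k, ∑ l, f i j k l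
      = ∑ i, ∑ k, ∑ j, ∑ l, f i j k l :=
        Finset.sum_congr rfl fun i _ => Finset.sum_comm
    _ = ∑ i, ∑ k, ∑ l, ∑ j, f i j k l :=
        Finset.sum_congr rfl fun i _ => Finset.sum_congr rfl fun k _ => Finset.sum_comm
    _ = ∑ k, ∑ i, ∑ l, ∑ j, f i j k l := Finset.sum_comm
    _ = ∑ k, ∑ l, ∑ i, ∑ j, f i j k l :=
        Finset.sum_congr rfl fun k _ => Finset.sum_comm

private lemma Zmat_apply {n d : ℕ} (A : Matrix (Fin n) (Fin d) ℝ) (t : Fin n → ℝ) (k l : Fin d) :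
    Zmat A t k l = ∑ i, Real.exp (t i) * (A i k * A i l) := by
  rw [Zmat, Matrix.sum_apply]
  simp [vecMulVec_apply]

private lemma Zmat_quad {n d : ℕ} (A : Matrix (Fin n) (Fin d) ℝ) (t : Fin n → ℝ) (x : Fin d → ℝ) :
    x ⬝ᵥ (Zmat A t *ᵥ x) = ∑ i, Real.exp (t i) * (A i ⬝ᵥ x) ^ 2 := by
  simp only [dotProduct, Matrix.mulVec, pow_two, Zmat_apply, smul_eq_mul,
    Finset.mul_sum, Finset.sum_mul]
  rw [show (∑ k, ∑ l, ∑ i, x k * (Real.exp (t i) * (A i k * A i l) * x l))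
      = ∑ k, ∑ i, ∑ l, x k * (Real.exp (t i) * (A i k * A i l) * x l) from
    Finset.sum_congr rfl fun k _ => Finset.sum_comm, Finset.sum_comm]
  refine Finset.sum_congr rfl fun i _ => ?_
  rw [Finset.sum_comm]
  exact Finset.sum_congr rfl fun k _ => Finset.sum_congr rfl fun l _ => by ring

private lemma Zmat_posDef {n d : ℕ} (A : Matrix (Fin n) (Fin d) ℝ)
    (hspan : Submodule.span ℝ (Set.range fun i => A i) = ⊤) (t : Fin n → ℝ) :
    (Zmat A t).PosDef := by
  refine Matrix.posDef_iff_dotProduct_mulVec.mpr ⟨?_, ?_⟩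
  · show (Zmat A t)ᴴ = Zmat A t
    ext k l
    simp only [conjTranspose_apply, Zmat_apply, star_trivial]
    exact Finset.sum_congr rfl fun i _ => by ring
  · intro x hx
    rw [star_trivial, Zmat_quad]
    rcases lt_or_eq_of_le (Finset.sum_nonneg fun i _ =>
      mul_nonneg (Real.exp_pos _).le (sq_nonneg (A i ⬝ᵥ x))) with h | h
    · exact h
    · exfalso
      have hzero : ∀ i, A i ⬝ᵥ x = 0 := by
        intro i
        have h0 := (Finset.sum_eq_zero_iff_of_nonneg (fun i _ =>
          mul_nonneg (Real.exp_pos _).le (sq_nonneg (A i ⬝ᵥ x)))).mp h.symm i (Finset.mem_univ i)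
        have := mul_eq_zero.mp h0
        rcases this with h1 | h1
        · exact absurd h1 (Real.exp_pos _).ne'
        · exact (pow_eq_zero_iff two_ne_zero).mp h1
      have hx0 : ∀ y ∈ Submodule.span ℝ (Set.range fun i => A i), y ⬝ᵥ x = 0 := by
        intro y hy
        induction hy using Submodule.span_induction with
        | mem y hy => obtain ⟨i, rfl⟩ := hy; exact hzero i
        | zero => simp
        | add y z _ _ hy hz => rw [add_dotProduct, hy, hz, add_zero]
        | smul r y _ hy => rw [smul_dotProduct, hy, smul_zero]
      have hxx : x ⬝ᵥ x = 0 := hx0 x (by rw [hspan]; trivial)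
      exact hx (dotProduct_self_eq_zero.mp hxx)

open scoped MatrixOrder Matrix.Norms.L2Operator in
private lemma psd_sqrt_exists {d : ℕ} {W : Matrix (Fin d) (Fin d) ℝ} (hW : W.PosSemidef) :
    ∃ R : Matrix (Fin d) (Fin d) ℝ, R * R = W ∧ Rᵀ = R := by
  have h0 : 0 ≤ W := Matrix.nonneg_iff_posSemidef.mpr hW
  refine ⟨CFC.sqrt W, CFC.sqrt_mul_sqrt_self W h0, ?_⟩
  have := (Matrix.nonneg_iff_posSemidef.mp (CFC.sqrt_nonneg W)).1
  exact Matrix.IsSymm.eq (by simpa [Matrix.conjTranspose_eq_transpose_of_trivial] using this)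

/-- Barthe's objective is `d`-smooth with respect to the `ℓ∞` norm:
`H(t)[v,v] ≤ ∑ i, v_i² exp(t_i) a_iᵀZ(t)⁻¹a_i ≤ d·(max_i |v_i|)²`.
Here `‖v‖` on `Fin n → ℝ` is the sup norm `max_i |v_i|`. -/
theorem stmt_10 (n d : ℕ) (hn : 1 ≤ n) (hd : 1 ≤ d)
    (A : Matrix (Fin n) (Fin d) ℝ)
    (hspan : Submodule.span ℝ (Set.range fun i => A i) = ⊤) :
    ∀ (t v : Fin n → ℝ),
      bartheH A t v ≤ ∑ i, v i ^ 2 * Real.exp (t i) * (A i ⬝ᵥ ((Zmat A t)⁻¹ *ᵥ A i)) ∧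
      ∑ i, v i ^ 2 * Real.exp (t i) * (A i ⬝ᵥ ((Zmat A t)⁻¹ *ᵥ A i)) ≤ d * ‖v‖ ^ 2 := by
  intro t v
  have hZ : (Zmat A t).PosDef := Zmat_posDef A hspan t
  set W := (Zmat A t)⁻¹ with hWdef
  have hW : W.PosDef := hZ.inv
  have hWps := hW.posSemidef
  have hWnn : ∀ x : Fin d → ℝ, 0 ≤ x ⬝ᵥ (W *ᵥ x) := fun x => by
    simpa using hWps.dotProduct_mulVec_nonneg x
  -- square root
  obtain ⟨R, hRR', hRsym'⟩ := psd_sqrt_exists hWps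
  have hRR : R * R = W := hRR'
  have hRsym : Rᵀ = R := hRsym'
  have hdot : ∀ i j, A i ⬝ᵥ (W *ᵥ A j) = (R *ᵥ A i) ⬝ᵥ (R *ᵥ A j) := by
    intro i j
    rw [← hRR, ← Matrix.mulVec_mulVec, Matrix.dotProduct_mulVec,
      ← Matrix.mulVec_transpose, hRsym]
  constructor
  · -- first inequality: double sum is nonnegative
    rw [bartheH]
    have : 0 ≤ ∑ i, ∑ j,
        v i * v j * Real.exp (t i + t j) * (A i ⬝ᵥ (W *ᵥ A j)) ^ 2 := by
      set c : Fin n → ℝ := fun i => v i * Real.exp (t i) with hc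
      set b : Fin n → Fin d → ℝ := fun i => R *ᵥ A i with hb
      have heq : ∑ i, ∑ j, v i * v j * Real.exp (t i + t j) * (A i ⬝ᵥ (W *ᵥ A j)) ^ 2
          = ∑ k, ∑ l, (∑ i, c i * (b i k * b i l)) ^ 2 := by
        calc ∑ i, ∑ j, v i * v j * Real.exp (t i + t j) * (A i ⬝ᵥ (W *ᵥ A j)) ^ 2
            = ∑ i, ∑ j, ∑ k, ∑ l,
                (c i * (b i k * b i l)) * (c j * (b j k * b j l)) := by
              refine Finset.sum_congr rfl fun i _ => Finset.sum_congr rfl fun j _ => ?_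
              rw [hdot i j]
              simp only [dotProduct, pow_two, Finset.sum_mul, Finset.mul_sum,
                Real.exp_add]
              refine Finset.sum_congr rfl fun k _ => Finset.sum_congr rfl fun l _ => by
                simp only [hc, hb]; ring
          _ = ∑ k, ∑ l, ∑ i, ∑ j,
                (c i * (b i k * b i l)) * (c j * (b j k * b j l)) := sum_comm4 _
          _ = ∑ k, ∑ l, (∑ i, c i * (b i k * b i l)) ^ 2 := by
              refine Finset.sum_congr rfl fun k _ => Finset.sum_congr rfl fun l _ => ?_
              rw [pow_two, Finset.sum_mul_sum]
      rw [heq]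
      exact Finset.sum_nonneg fun k _ => Finset.sum_nonneg fun l _ => sq_nonneg _
    linarith
  · -- second inequality
    have hWZ : W * Zmat A t = 1 :=
      Matrix.nonsing_inv_mul _ (isUnit_iff_ne_zero.mpr hZ.det_pos.ne')
    have key : ∑ i, Real.exp (t i) * (A i ⬝ᵥ (W *ᵥ A i)) = (d : ℝ) := by
      have h1 : (W * Zmat A t).trace = (d : ℝ) := by
        rw [hWZ, Matrix.trace_one]; simp
      rw [← h1, Matrix.trace]
      simp only [Matrix.diag_apply, Matrix.mul_apply, Zmat_apply, dotProduct,
        Matrix.mulVec, Finset.mul_sum]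
      rw [sum_comm3]
      exact Finset.sum_congr rfl fun k _ => Finset.sum_congr rfl fun l _ =>
        Finset.sum_congr rfl fun i _ => by ring
    calc ∑ i, v i ^ 2 * Real.exp (t i) * (A i ⬝ᵥ (W *ᵥ A i))
        ≤ ∑ i, ‖v‖ ^ 2 * (Real.exp (t i) * (A i ⬝ᵥ (W *ᵥ A i))) := by
          refine Finset.sum_le_sum fun i _ => ?_
          have h1 : v i ^ 2 ≤ ‖v‖ ^ 2 := by
            have hni : ‖v i‖ ≤ ‖v‖ := norm_le_pi_norm v i
            calc v i ^ 2 = ‖v i‖ ^ 2 := by rw [Real.norm_eq_abs, sq_abs]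
              _ ≤ ‖v‖ ^ 2 := pow_le_pow_left₀ (norm_nonneg _) hni 2
          have h2 : 0 ≤ Real.exp (t i) * (A i ⬝ᵥ (W *ᵥ A i)) :=
            mul_nonneg (Real.exp_pos _).le (hWnn _)
          calc v i ^ 2 * Real.exp (t i) * (A i ⬝ᵥ (W *ᵥ A i))
              = v i ^ 2 * (Real.exp (t i) * (A i ⬝ᵥ (W *ᵥ A i))) := by ring
            _ ≤ ‖v‖ ^ 2 * (Real.exp (t i) * (A i ⬝ᵥ (W *ᵥ A i))) :=
                mul_le_mul_of_nonneg_right h1 h2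
      _ = (d : ℝ) * ‖v‖ ^ 2 := by rw [← Finset.mul_sum, key]; ring
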